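/- No polygonal chain of 3 or fewer line segments in ℝ² covers all 9 points of the grid {0,1,2} × {0,1,2}. -/
import Mathlib

lemma fin_cast_inj {i j : Fin 3} (h : (i:ℝ) = (j:ℝ)) : i = j := by
  have h2 : i.val = j.val := by exact_mod_cast h
  exact Fin.ext h2

lemma fin_cast_ne {i j : Fin 3} (h : i ≠ j) : (i:ℝ) ≠ (j:ℝ) :=
  fun hc => h (fin_cast_inj hc)

lemma seg_param {a b : ℝ × ℝ} {x y : ℝ} (h : (x, y) ∈ segment ℝ a b) :
    ∃ t : ℝ, x = a.1 + t * (b.1 - a.1) ∧ y = a.2 + t * (b.2 - a.2) := by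
  obtain ⟨u, v, hu, hv, huv, hz⟩ := h
  have hu1 : u = 1 - v := by linarith
  refine ⟨v, ?_, ?_⟩
  · have h1 := congrArg Prod.fst hz
    simp [hu1] at h1
    rw [← h1]; ring
  · have h1 := congrArg Prod.snd hz
    simp [hu1] at h1
    rw [← h1]; ring

lemma horiz {a b : ℝ × ℝ} {x1 x2 y : ℝ} (hne : x1 ≠ x2)
    (h1 : (x1, y) ∈ segment ℝ a b) (h2 : (x2, y) ∈ segment ℝ a b) :
    ∀ z ∈ segment ℝ a b, z.2 = y := by
  obtain ⟨t, ht1, ht2⟩ := seg_param h1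
  obtain ⟨s, hs1, hs2⟩ := seg_param h2
  intro z hz
  obtain ⟨u, hu1, hu2⟩ := seg_param (a := a) (b := b) (x := z.1) (y := z.2) (by simpa using hz)
  have hts : t ≠ s := fun h => hne (by rw [ht1, hs1, h])
  have hb2 : b.2 - a.2 = 0 := by
    rcases mul_eq_zero.1 (show (t - s) * (b.2 - a.2) = 0 by linarith) with h | h
    · exact absurd (by linarith : t = s) hts
    · exact h
  rw [hb2] at hu2 ht2
  simp at hu2 ht2
  rw [hu2, ht2]

lemma vert {a b : ℝ × ℝ} {y1 y2 x : ℝ} (hne : y1 ≠ y2)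
    (h1 : (x, y1) ∈ segment ℝ a b) (h2 : (x, y2) ∈ segment ℝ a b) :
    ∀ z ∈ segment ℝ a b, z.1 = x := by
  obtain ⟨t, ht1, ht2⟩ := seg_param h1
  obtain ⟨s, hs1, hs2⟩ := seg_param h2
  intro z hz
  obtain ⟨u, hu1, hu2⟩ := seg_param (a := a) (b := b) (x := z.1) (y := z.2) (by simpa using hz)
  have hts : t ≠ s := fun h => hne (by rw [ht2, hs2, h])
  have hb1 : b.1 - a.1 = 0 := by
    rcases mul_eq_zero.1 (show (t - s) * (b.1 - a.1) = 0 by linarith) with h | h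
    · exact absurd (by linarith : t = s) hts
    · exact h
  rw [hb1] at hu1 ht1
  simp at hu1 ht1
  rw [hu1, ht1]

lemma colinear3 {a b : ℝ × ℝ} {x1 y1 x2 y2 x3 y3 : ℝ}
    (h1 : (x1, y1) ∈ segment ℝ a b) (h2 : (x2, y2) ∈ segment ℝ a b)
    (h3 : (x3, y3) ∈ segment ℝ a b) :
    (x2 - x1) * (y3 - y1) = (x3 - x1) * (y2 - y1) := by
  obtain ⟨t, ht1, ht2⟩ := seg_param h1
  obtain ⟨s, hs1, hs2⟩ := seg_param h2
  obtain ⟨r, hr1, hr2⟩ := seg_param h3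
  rw [ht1, ht2, hs1, hs2, hr1, hr2]; ring

lemma pigeon3 : ∀ a b c m : Fin 3, a ≠ m → b ≠ m → c ≠ m → a = b ∨ a = c ∨ b = c := by decide

lemma pigeon2 : ∀ a b c : Fin 2, a = b ∨ a = c ∨ b = c := by decide

lemma fin2_eq : ∀ a b m : Fin 2, a ≠ m → b ≠ m → a = b := by decide

lemma fin2_absurd : ∀ a m m' : Fin 2, m ≠ m' → a ≠ m → a ≠ m' → False := by decide

lemma surj3 : ∀ m0 m1 m2 : Fin 3, m0 ≠ m1 → m0 ≠ m2 → m1 ≠ m2 →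
    ∀ t : Fin 3, t = m0 ∨ t = m1 ∨ t = m2 := by decide

lemma patlemma : ∀ a b c : Fin 3, a ≠ b → a ≠ c → b ≠ c → 2 * b.val = a.val + c.val →
    (a = 0 ∧ b = 1 ∧ c = 2) ∨ (a = 2 ∧ b = 1 ∧ c = 0) := by decide

lemma threevals : ∀ x y z : Fin 3, x ≠ y → x ≠ z → y ≠ z →
    (x = 0 ∨ x = 2) → (y = 0 ∨ y = 2) → (z = 0 ∨ z = 2) → False := by decide

lemma rows_case {p : Fin 4 → ℝ × ℝ} {f : Fin 3 → Fin 3 → Fin 3}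
    (hf : ∀ i j : Fin 3, ((i:ℝ), (j:ℝ)) ∈ segment ℝ (p (f i j).castSucc) (p (f i j).succ))
    (hdup : ∃ j i i', i ≠ i' ∧ f i j = f i' j) : False := by
  obtain ⟨j0, i0, i0', hne0, heq0⟩ := hdup
  have hS0 : ∀ z ∈ segment ℝ (p (f i0 j0).castSucc) (p (f i0 j0).succ), z.2 = ((j0:Fin 3):ℝ) :=
    horiz (fin_cast_ne hne0) (hf i0 j0) (by have := hf i0' j0; rw [← heq0] at this; exact this)
  have hall : ∀ j : Fin 3, ∃ i i', i ≠ i' ∧ f i j = f i' j := by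
    intro j
    by_cases hj : j = j0
    · exact hj ▸ ⟨i0, i0', hne0, heq0⟩
    · have hnot : ∀ i, f i j ≠ f i0 j0 := by
        intro i hc
        apply hj
        apply fin_cast_inj
        exact hS0 _ (by have := hf i j; rw [hc] at this; exact this)
      rcases pigeon3 (f 0 j) (f 1 j) (f 2 j) (f i0 j0) (hnot 0) (hnot 1) (hnot 2) with h|h|h
      exacts [⟨0, 1, by decide, h⟩, ⟨0, 2, by decide, h⟩, ⟨1, 2, by decide, h⟩]
  choose I I' hII hfeq using hall
  have hseg : ∀ j, ∀ z ∈ segment ℝ (p (f (I j) j).castSucc) (p (f (I j) j).succ),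
      z.2 = (j:ℝ) := by
    intro j
    exact horiz (fin_cast_ne (hII j)) (hf (I j) j)
      (by have := hf (I' j) j; rw [← hfeq j] at this; exact this)
  have hinj : ∀ j j', f (I j) j = f (I j') j' → j = j' := by
    intro j j' he
    apply fin_cast_inj
    exact hseg j' _ (by have := hf (I j) j; rw [he] at this; exact this)
  have hd : ∀ j j' : Fin 3, j ≠ j' → f (I j) j ≠ f (I j') j' :=
    fun j j' hne hc => hne (hinj _ _ hc)
  have hsur := surj3 _ _ _ (hd 0 1 (by decide)) (hd 0 2 (by decide)) (hd 1 2 (by decide))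
  have hmem0 : p ((0:Fin 3).succ) ∈ segment ℝ (p (0:Fin 3).castSucc) (p (0:Fin 3).succ) :=
    right_mem_segment ℝ _ _
  have hmem1 : p ((0:Fin 3).succ) ∈ segment ℝ (p (1:Fin 3).castSucc) (p (1:Fin 3).succ) := by
    have h : (0:Fin 3).succ = (1:Fin 3).castSucc := by decide
    rw [h]; exact left_mem_segment ℝ _ _
  obtain ⟨ja, hja⟩ : ∃ j, f (I j) j = 0 := by
    rcases hsur 0 with h|h|h
    exacts [⟨0, h.symm⟩, ⟨1, h.symm⟩, ⟨2, h.symm⟩]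
  obtain ⟨jb, hjb⟩ : ∃ j, f (I j) j = 1 := by
    rcases hsur 1 with h|h|h
    exacts [⟨0, h.symm⟩, ⟨1, h.symm⟩, ⟨2, h.symm⟩]
  have e1 : (p ((0:Fin 3).succ)).2 = (ja:ℝ) := hseg ja _ (by rw [hja]; exact hmem0)
  have e2 : (p ((0:Fin 3).succ)).2 = (jb:ℝ) := hseg jb _ (by rw [hjb]; exact hmem1)
  have hab : ja = jb := fin_cast_inj (by rw [← e1, e2])
  rw [hab] at hja
  exact absurd (hja.symm.trans hjb) (by decide)

lemma cols_case {p : Fin 4 → ℝ × ℝ} {f : Fin 3 → Fin 3 → Fin 3}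
    (hf : ∀ i j : Fin 3, ((i:ℝ), (j:ℝ)) ∈ segment ℝ (p (f i j).castSucc) (p (f i j).succ))
    (hdup : ∃ i j j', j ≠ j' ∧ f i j = f i j') : False := by
  obtain ⟨i0, j0, j0', hne0, heq0⟩ := hdup
  have hS0 : ∀ z ∈ segment ℝ (p (f i0 j0).castSucc) (p (f i0 j0).succ), z.1 = ((i0:Fin 3):ℝ) :=
    vert (fin_cast_ne hne0) (hf i0 j0) (by have := hf i0 j0'; rw [← heq0] at this; exact this)
  have hall : ∀ i : Fin 3, ∃ j j', j ≠ j' ∧ f i j = f i j' := by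
    intro i
    by_cases hi : i = i0
    · exact hi ▸ ⟨j0, j0', hne0, heq0⟩
    · have hnot : ∀ j, f i j ≠ f i0 j0 := by
        intro j hc
        apply hi
        apply fin_cast_inj
        exact hS0 _ (by have := hf i j; rw [hc] at this; exact this)
      rcases pigeon3 (f i 0) (f i 1) (f i 2) (f i0 j0) (hnot 0) (hnot 1) (hnot 2) with h|h|h
      exacts [⟨0, 1, by decide, h⟩, ⟨0, 2, by decide, h⟩, ⟨1, 2, by decide, h⟩]
  choose J J' hJJ hfeq using hall
  have hseg : ∀ i, ∀ z ∈ segment ℝ (p (f i (J i)).castSucc) (p (f i (J i)).succ),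
      z.1 = (i:ℝ) := by
    intro i
    exact vert (fin_cast_ne (hJJ i)) (hf i (J i))
      (by have := hf i (J' i); rw [← hfeq i] at this; exact this)
  have hinj : ∀ i i', f i (J i) = f i' (J i') → i = i' := by
    intro i i' he
    apply fin_cast_inj
    exact hseg i' _ (by have := hf i (J i); rw [he] at this; exact this)
  have hd : ∀ i i' : Fin 3, i ≠ i' → f i (J i) ≠ f i' (J i') :=
    fun i i' hne hc => hne (hinj _ _ hc)
  have hsur := surj3 _ _ _ (hd 0 1 (by decide)) (hd 0 2 (by decide)) (hd 1 2 (by decide))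
  have hmem0 : p ((0:Fin 3).succ) ∈ segment ℝ (p (0:Fin 3).castSucc) (p (0:Fin 3).succ) :=
    right_mem_segment ℝ _ _
  have hmem1 : p ((0:Fin 3).succ) ∈ segment ℝ (p (1:Fin 3).castSucc) (p (1:Fin 3).succ) := by
    have h : (0:Fin 3).succ = (1:Fin 3).castSucc := by decide
    rw [h]; exact left_mem_segment ℝ _ _
  obtain ⟨ia, hia⟩ : ∃ i, f i (J i) = 0 := by
    rcases hsur 0 with h|h|h
    exacts [⟨0, h.symm⟩, ⟨1, h.symm⟩, ⟨2, h.symm⟩]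
  obtain ⟨ib, hib⟩ : ∃ i, f i (J i) = 1 := by
    rcases hsur 1 with h|h|h
    exacts [⟨0, h.symm⟩, ⟨1, h.symm⟩, ⟨2, h.symm⟩]
  have e1 : (p ((0:Fin 3).succ)).1 = (ia:ℝ) := hseg ia _ (by rw [hia]; exact hmem0)
  have e2 : (p ((0:Fin 3).succ)).1 = (ib:ℝ) := hseg ib _ (by rw [hib]; exact hmem1)
  have hab : ia = ib := fin_cast_inj (by rw [← e1, e2])
  rw [hab] at hia
  exact absurd (hia.symm.trans hib) (by decide)

theorem nine_dot_lower_bound (n : ℕ) (hn : n ≤ 3) (p : Fin (n + 1) → ℝ × ℝ) :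
    ¬ ∀ i j : Fin 3, ∃ m : Fin n,
        ((i : ℝ), (j : ℝ)) ∈ segment ℝ (p m.castSucc) (p m.succ) := by
  intro h
  choose f hf using h
  interval_cases n
  · exact Fin.elim0 (f 0 0)
  · -- n = 1
    have he : f 1 0 = f 0 0 := Subsingleton.elim _ _
    have hS : ∀ z ∈ segment ℝ (p (f 0 0).castSucc) (p (f 0 0).succ), z.2 = ((0:Fin 3):ℝ) :=
      horiz (fin_cast_ne (show (0:Fin 3) ≠ 1 by decide)) (hf 0 0)
        (by have := hf 1 0; rw [he] at this; exact this)
    have h01 : f 0 1 = f 0 0 := Subsingleton.elim _ _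
    have := hS _ (by have := hf 0 1; rw [h01] at this; exact this)
    exact fin_cast_ne (show (1:Fin 3) ≠ 0 by decide) this
  · -- n = 2
    obtain ⟨i, i', hii, heq⟩ : ∃ i i' : Fin 3, i ≠ i' ∧ f i 0 = f i' 0 := by
      rcases pigeon2 (f 0 0) (f 1 0) (f 2 0) with h|h|h
      exacts [⟨0, 1, by decide, h⟩, ⟨0, 2, by decide, h⟩, ⟨1, 2, by decide, h⟩]
    have hS0 : ∀ z ∈ segment ℝ (p (f i 0).castSucc) (p (f i 0).succ), z.2 = ((0:Fin 3):ℝ) :=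
      horiz (fin_cast_ne hii) (hf i 0) (by have := hf i' 0; rw [← heq] at this; exact this)
    have hrow1 : ∀ i2 : Fin 3, f i2 1 ≠ f i 0 := by
      intro i2 hc
      have := hS0 _ (by have := hf i2 1; rw [hc] at this; exact this)
      exact fin_cast_ne (show (1:Fin 3) ≠ 0 by decide) this
    have h01 : f 0 1 = f 1 1 := fin2_eq _ _ _ (hrow1 0) (hrow1 1)
    have hS1 : ∀ z ∈ segment ℝ (p (f 0 1).castSucc) (p (f 0 1).succ), z.2 = ((1:Fin 3):ℝ) :=
      horiz (fin_cast_ne (show (0:Fin 3) ≠ 1 by decide)) (hf 0 1)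
        (by have := hf 1 1; rw [← h01] at this; exact this)
    have hrow2a : f 0 2 ≠ f i 0 := by
      intro hc
      have := hS0 _ (by have := hf 0 2; rw [hc] at this; exact this)
      exact fin_cast_ne (show (2:Fin 3) ≠ 0 by decide) this
    have hrow2b : f 0 2 ≠ f 0 1 := by
      intro hc
      have := hS1 _ (by have := hf 0 2; rw [hc] at this; exact this)
      exact fin_cast_ne (show (2:Fin 3) ≠ 1 by decide) this
    exact fin2_absurd (f 0 2) (f i 0) (f 0 1) (Ne.symm (hrow1 0)) hrow2a hrow2b
  · -- n = 3
    by_cases h1 : ∃ j i i' : Fin 3, i ≠ i' ∧ f i j = f i' j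
    · exact rows_case hf h1
    by_cases h2 : ∃ i j j' : Fin 3, j ≠ j' ∧ f i j = f i j'
    · exact cols_case hf h2
    push_neg at h1 h2
    have hsurj : ∀ j m : Fin 3, ∃ i, f i j = m := by
      intro j m
      have hi : Function.Injective (fun i => f i j) := by
        intro a b hab
        by_contra hne
        exact h1 j a b hne hab
      exact Finite.injective_iff_surjective.mp hi m
    choose τ hτ using hsurj
    have hτinj : ∀ m j j' : Fin 3, j ≠ j' → τ j m ≠ τ j' m := by
      intro m j j' hjj hc
      exact h2 (τ j m) j j' hjj (by rw [hτ j m, hc, hτ j' m])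
    have hlin : ∀ m : Fin 3, 2 * (τ 1 m).val = (τ 0 m).val + (τ 2 m).val := by
      intro m
      have h0 := hf (τ 0 m) 0; rw [hτ 0 m] at h0
      have ha := hf (τ 1 m) 1; rw [hτ 1 m] at ha
      have hb := hf (τ 2 m) 2; rw [hτ 2 m] at hb
      have hc := colinear3 h0 ha hb
      have c0 : ((0:Fin 3):ℝ) = 0 := by norm_num
      have c1 : ((1:Fin 3):ℝ) = 1 := by norm_num [Fin.val_one]
      have c2 : ((2:Fin 3):ℝ) = 2 := by norm_num [Fin.val_two]
      rw [c0, c1, c2] at hc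
      have h' : 2 * ((τ 1 m : Fin 3):ℝ) = ((τ 0 m : Fin 3):ℝ) + ((τ 2 m : Fin 3):ℝ) := by
        linarith
      exact_mod_cast h'
    have hpat := fun m => patlemma _ _ _ (hτinj m 0 1 (by decide)) (hτinj m 0 2 (by decide))
      (hτinj m 1 2 (by decide)) (hlin m)
    have hτ0inj : ∀ m m' : Fin 3, m ≠ m' → τ 0 m ≠ τ 0 m' := by
      intro m m' hmm hc
      apply hmm
      rw [← hτ 0 m, ← hτ 0 m', hc]
    apply threevals (τ 0 0) (τ 0 1) (τ 0 2) (hτ0inj 0 1 (by decide)) (hτ0inj 0 2 (by decide))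
      (hτ0inj 1 2 (by decide))
    · rcases hpat 0 with ⟨h,_,_⟩|⟨h,_,_⟩
      exacts [Or.inl h, Or.inr h]
    · rcases hpat 1 with ⟨h,_,_⟩|⟨h,_,_⟩
      exacts [Or.inl h, Or.inr h]
    · rcases hpat 2 with ⟨h,_,_⟩|⟨h,_,_⟩
      exacts [Or.inl h, Or.inr h]
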